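/- For the automorphism D_{-1} of the standard theta group G(K) = G_m × K × K^D given by (α,x,l) ↦ (α,-x,l^{-1}), and any integer m, every group element g satisfies D_m(g) = g^{(m²+m)/2} · D_{-1}(g)^{(m²-m)/2}, where D_m(α,x,l) = (α^{m²}, mx, l^m). -/

import Mathlib

variable (k K : Type*) [Field k] [AddCommGroup K]

/-- The standard (Heisenberg) theta group `G(K) = kˣ × K × K^D`. -/
def ThetaGroup := kˣ × K × AddChar K kˣ

namespace ThetaGroup

variable {k K}

instance : Group (ThetaGroup k K) where
  mul g h := (g.1 * h.1 * h.2.2 g.2.1, g.2.1 + h.2.1, g.2.2 * h.2.2)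
  one := (1, 0, 1)
  inv g := ((g.1)⁻¹ * g.2.2 g.2.1, -g.2.1, (g.2.2)⁻¹)
  mul_assoc a b c := by
    refine Prod.ext ?_ (Prod.ext ?_ ?_)
    · show a.1 * b.1 * b.2.2 a.2.1 * c.1 * c.2.2 (a.2.1 + b.2.1)
        = a.1 * (b.1 * c.1 * c.2.2 b.2.1) * (b.2.2 * c.2.2) a.2.1
      simp only [AddChar.map_add_eq_mul, AddChar.mul_apply]
      simp [mul_assoc, mul_comm, mul_left_comm]
    · show a.2.1 + b.2.1 + c.2.1 = a.2.1 + (b.2.1 + c.2.1)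
      abel
    · show a.2.2 * b.2.2 * c.2.2 = a.2.2 * (b.2.2 * c.2.2)
      exact mul_assoc _ _ _
  one_mul a := by
    refine Prod.ext ?_ (Prod.ext ?_ ?_)
    · show (1:kˣ) * a.1 * a.2.2 0 = a.1; simp
    · show (0:K) + a.2.1 = a.2.1; exact zero_add _
    · show 1 * a.2.2 = a.2.2; exact one_mul a.2.2
  mul_one a := by
    refine Prod.ext ?_ (Prod.ext ?_ ?_)
    · show a.1 * 1 * (1 : AddChar K kˣ) a.2.1 = a.1; simp
    · show a.2.1 + (0:K) = a.2.1; exact add_zero _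
    · show a.2.2 * 1 = a.2.2; exact mul_one a.2.2
  inv_mul_cancel a := by
    refine Prod.ext ?_ (Prod.ext ?_ ?_)
    · show (a.1)⁻¹ * a.2.2 a.2.1 * a.1 * a.2.2 (-a.2.1) = 1
      rw [AddChar.map_neg_eq_inv]
      simp [mul_assoc, mul_comm, mul_left_comm]
    · show -a.2.1 + a.2.1 = 0; simp
    · show (a.2.2)⁻¹ * a.2.2 = 1; simp

/-- The map `D_m : G(K) → G(K)`, `(α, x, l) ↦ (α^{m²}, m·x, l^m)`. -/
def Dm (m : ℤ) (g : ThetaGroup k K) : ThetaGroup k K :=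
  (g.1 ^ (m ^ 2), m • g.2.1, g.2.2 ^ m)

/-- The map `D_{-1} : G(K) → G(K)`, `(α, x, l) ↦ (α, -x, l⁻¹)`. -/
def Dneg1 (g : ThetaGroup k K) : ThetaGroup k K :=
  (g.1, -g.2.1, (g.2.2)⁻¹)

/-!
Write `g = (α, x, l)` and `c = l(x)`. Then `D_{-1}(g) = z · g⁻¹` with `z = (α² c⁻¹, 0, 1)` central,
so `g^a · D_{-1}(g)^b = z^b · g^(a-b)`, and for `a = (m+1)m/2`, `b = m(m-1)/2` we have `a - b = m`.
Comparing with the explicit formula `g^m = (α^m c^b, m x, l^m)`, the `c`-powers cancel and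
the `α`-exponent is `2b + m = m²`.
-/

end ThetaGroup

lemma Int.add_one_mul_ediv_two (n : ℤ) : (n + 1) * n / 2 = n * (n - 1) / 2 + n := by
  rw [show (n + 1) * n = n * (n - 1) + n * 2 by ring]
  exact Int.add_mul_ediv_right _ _ two_ne_zero

lemma Commute.zpow_mul_mul_inv_zpow {G : Type*} [Group G] {z g : G} (h : Commute z g) (a b : ℤ) :
    g ^ a * (z * g⁻¹) ^ b = z ^ b * g ^ (a - b) := by
  rw [(h.inv_right).mul_zpow, ← mul_assoc, ((h.zpow_zpow b a).symm).eq, mul_assoc, inv_zpow',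
    ← zpow_add, sub_eq_add_neg]

namespace ThetaGroup

variable {k K}

lemma mul_def (g h : ThetaGroup k K) :
    g * h = (g.1 * h.1 * h.2.2 g.2.1, g.2.1 + h.2.1, g.2.2 * h.2.2) := rfl

lemma inv_def (g : ThetaGroup k K) : g⁻¹ = ((g.1)⁻¹ * g.2.2 g.2.1, -g.2.1, (g.2.2)⁻¹) := rfl

def central : kˣ →* ThetaGroup k K where
  toFun β := (β, 0, 1)
  map_one' := rfl
  map_mul' β γ := by
    refine Prod.ext ?_ (Prod.ext (add_zero (0 : K)).symm (mul_one (1 : AddChar K kˣ)).symm)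
    show β * γ = β * γ * (1 : AddChar K kˣ) 0
    simp

lemma central_mul (β : kˣ) (g : ThetaGroup k K) :
    (central β * g : ThetaGroup k K) = (β * g.1, g.2.1, g.2.2) := by
  rw [mul_def]
  refine Prod.ext ?_ (Prod.ext (zero_add g.2.1) (one_mul g.2.2))
  show β * g.1 * g.2.2 0 = β * g.1
  simp

lemma commute_central (β : kˣ) (g : ThetaGroup k K) : Commute (central β) g := by
  rw [Commute, SemiconjBy, central_mul, mul_def]
  refine Prod.ext ?_ (Prod.ext (add_zero g.2.1).symm (mul_one g.2.2).symm)
  show β * g.1 = g.1 * β * (1 : AddChar K kˣ) g.2.1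
  simp [mul_comm]

/-- The cocycle `l(x)^{n(n-1)/2}` in the first coordinate comes from `l(i•x) = l(x)^i`, summed over
`i < n`. -/
lemma zpow_def (g : ThetaGroup k K) (n : ℤ) :
    g ^ n = (g.1 ^ n * g.2.2 g.2.1 ^ (n * (n - 1) / 2), n • g.2.1, g.2.2 ^ n) := by
  set φ : ℤ → ThetaGroup k K :=
    fun n ↦ (g.1 ^ n * g.2.2 g.2.1 ^ (n * (n - 1) / 2), n • g.2.1, g.2.2 ^ n)
  have φ_succ (n : ℤ) : φ (n + 1) = φ n * g := by
    rw [mul_def]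
    refine Prod.ext ?_ (Prod.ext (add_one_zsmul ..) (zpow_add_one ..))
    show g.1 ^ (n + 1) * g.2.2 g.2.1 ^ ((n + 1) * (n + 1 - 1) / 2)
      = g.1 ^ n * g.2.2 g.2.1 ^ (n * (n - 1) / 2) * g.1 * g.2.2 (n • g.2.1)
    rw [add_sub_cancel_right, Int.add_one_mul_ediv_two, AddChar.map_zsmul_eq_zpow, zpow_add_one,
      zpow_add]
    simp only [mul_comm, mul_left_comm, mul_assoc]
  show g ^ n = φ n
  induction n using Int.induction_on with
  | zero => simp [φ]; rfl
  | succ n ih => rw [zpow_add_one, ih, φ_succ]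
  | pred n ih => rw [zpow_sub_one, ih, mul_inv_eq_iff_eq_mul, ← φ_succ, sub_add_cancel]

lemma Dneg1_eq_central_mul_inv (g : ThetaGroup k K) :
    Dneg1 g = central (g.1 ^ 2 * (g.2.2 g.2.1)⁻¹) * g⁻¹ := by
  rw [central_mul, inv_def]
  refine Prod.ext ?_ rfl
  show g.1 = g.1 ^ 2 * (g.2.2 g.2.1)⁻¹ * ((g.1)⁻¹ * g.2.2 g.2.1)
  rw [mul_mul_mul_comm, inv_mul_cancel, mul_one, sq, mul_inv_cancel_right]

lemma Dm_eq_central_mul_zpow (m : ℤ) (g : ThetaGroup k K) :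
    Dm m g = central ((g.1 ^ 2 * (g.2.2 g.2.1)⁻¹) ^ (m * (m - 1) / 2)) * g ^ m := by
  rw [central_mul, zpow_def]
  refine Prod.ext ?_ rfl
  show g.1 ^ (m ^ 2) = (g.1 ^ 2 * (g.2.2 g.2.1)⁻¹) ^ (m * (m - 1) / 2)
    * (g.1 ^ m * g.2.2 g.2.1 ^ (m * (m - 1) / 2))
  have h2 : 2 * (m * (m - 1) / 2) = m * (m - 1) :=
    Int.mul_ediv_cancel' (Int.even_mul_pred_self m).two_dvd
  rw [mul_zpow, mul_mul_mul_comm, inv_zpow, inv_mul_cancel, mul_one, ← zpow_natCast, ← zpow_mul,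
    ← zpow_add, Nat.cast_ofNat, h2]
  congr 1
  ring

/-- Every element `g` of the standard theta group satisfies
`D_m(g) = g^{(m²+m)/2} · D_{-1}(g)^{(m²-m)/2}`. -/
theorem Dm_eq_pow_mul_Dneg1_pow (m : ℤ) (g : ThetaGroup k K) :
    Dm m g = g ^ ((m ^ 2 + m) / 2) * Dneg1 g ^ ((m ^ 2 - m) / 2) := by
  rw [show m ^ 2 + m = (m + 1) * m by ring, show m ^ 2 - m = m * (m - 1) by ring]
  have h_sub : (m + 1) * m / 2 - m * (m - 1) / 2 = m := by
    rw [Int.add_one_mul_ediv_two, add_sub_cancel_left]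
  rw [Dneg1_eq_central_mul_inv, (commute_central _ g).zpow_mul_mul_inv_zpow, h_sub, ← map_zpow,
    Dm_eq_central_mul_zpow]

end ThetaGroup
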